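/- Let W be a non-negative integer-valued random variable with P(W = 0) > 0 and E W = (1−p)/p for some 0 < p ≤ 1, let W^{e0} be a random variable defined on the same probability space having the discrete equilibrium distribution w.r.t. W, and set D = W − W^{e0}. Then dTV(L(W^{e0}), Ge⁰(p)) ≤ p · E|D|. -/

import Mathlib

/-!
For `B ⊆ ℤ` put `g k = ∑_{j ≥ 0} (1-p)^j 1_B(k+j)`, so that `1_B(k) = g k - (1-p) g (k+1)` and
`Ge⁰(p){B} = p g 0`; `g` is 1-Lipschitz since `g k - g (k+1) = 1_B(k) - p g (k+1)` and
`0 ≤ p g ≤ 1`. The equilibrium law satisfies `E W · E φ(W^{e0}) = E ∑_{k<W} φ(k)`, which for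
`φ = g - g(· + 1)` telescopes to `g 0 - E g(W)`. Taking the expectation of the first identity at
`W^{e0}` and using `E W = (1-p)/p` gives `P(W^{e0} ∈ B) - Ge⁰(p){B} = p E[g(W^{e0}) - g(W)]`,
and `|g(W^{e0}) - g(W)| ≤ |D|`.

When `p = 1` the mean vanishes, so the equilibrium condition (with `x / 0 = 0`) leaves no mass
on `ℕ`: then `W^{e0} < 0 ≤ W` almost surely and `E|D| ≥ 1`.
-/

open MeasureTheory ProbabilityTheory Real

/-- `Ge⁰(p){B}`: probability that a geometric random variable on `{0,1,2,...}`
with parameter `p` (mass `(1-p)^k p` at `k`) lies in `B ⊆ ℤ`. -/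
noncomputable def ge0Prob (p : ℝ) (B : Set ℤ) : ℝ :=
  ∑' k : ℕ, B.indicator (fun _ => (1 - p) ^ k * p) (k : ℤ)

/-- Total variation distance between the law of an integer-valued random
variable `W` (under `μ`) and the geometric distribution `Ge⁰(p)` on `{0,1,2,...}`. -/
noncomputable def dTVGe0 {Ω : Type*} [MeasurableSpace Ω] (μ : Measure Ω)
    (W : Ω → ℤ) (p : ℝ) : ℝ :=
  ⨆ B : Set ℤ, |(μ {ω | W ω ∈ B}).toReal - ge0Prob p B|

lemma abs_sub_le_mul_of_abs_succ_sub_le {f : ℤ → ℝ} {C : ℝ} (hf : ∀ k, |f (k + 1) - f k| ≤ C)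
    (a b : ℤ) : |f a - f b| ≤ C * |(a : ℝ) - b| := by
  wlog hba : b ≤ a generalizing a b
  · rw [abs_sub_comm, abs_sub_comm (a : ℝ)]
    exact this b a (by omega)
  obtain ⟨n, rfl⟩ : ∃ n : ℕ, a = b + n := ⟨(a - b).toNat, by omega⟩
  have htelescope : f (b + n) - f b = ∑ i ∈ Finset.range n, (f (b + (i + 1 : ℕ)) - f (b + i)) := by
    rw [Finset.sum_range_sub (fun i : ℕ => f (b + i))]
    simp
  calc |f (b + n) - f b| ≤ ∑ i ∈ Finset.range n, |f (b + (i + 1 : ℕ)) - f (b + i)| :=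
        htelescope ▸ Finset.abs_sum_le_sum_abs _ _
    _ ≤ ∑ i ∈ Finset.range n, C :=
        Finset.sum_le_sum fun i _ => by simpa [add_assoc] using hf (b + i)
    _ = C * |((b + n : ℤ) : ℝ) - b| := by simp [mul_comm]

lemma ENNReal.ofReal_iSup_le {ι : Sort*} {f : ι → ℝ} {c : ENNReal}
    (h : ∀ i, ENNReal.ofReal (f i) ≤ c) : ENNReal.ofReal (⨆ i, f i) ≤ c := by
  rcases eq_top_or_lt_top c with rfl | hc
  · exact le_top
  rw [← ENNReal.ofReal_toReal hc.ne]
  exact ENNReal.ofReal_le_ofReal <| Real.iSup_le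
    (fun i => (ENNReal.ofReal_le_iff_le_toReal hc.ne).1 (h i)) ENNReal.toReal_nonneg

noncomputable def geomPotential (p : ℝ) (B : Set ℤ) (k : ℤ) : ℝ :=
  ∑' j : ℕ, (1 - p) ^ j * B.indicator 1 (k + j)

section GeomPotential

variable {p : ℝ} (B : Set ℤ)

lemma ge0Prob_eq_mul_geomPotential : ge0Prob p B = p * geomPotential p B 0 := by
  rw [geomPotential, ← tsum_mul_left, ge0Prob]
  congr 1 with k
  by_cases hk : (k : ℤ) ∈ B <;> simp [hk, mul_comm]

lemma geomPotential_nonneg (hp1 : p ≤ 1) (k : ℤ) : 0 ≤ geomPotential p B k :=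
  tsum_nonneg fun j => mul_nonneg (pow_nonneg (by linarith) j) (Set.indicator_nonneg (by simp) _)

variable (hp0 : 0 < p) (hp1 : p ≤ 1)
include hp0 hp1

lemma summable_geomPotential (k : ℤ) :
    Summable fun j : ℕ => (1 - p) ^ j * B.indicator 1 (k + j) := by
  refine (summable_geometric_of_lt_one (r := 1 - p) (by linarith) (by linarith)).of_nonneg_of_le
    (fun j => ?_) (fun j => ?_)
  · exact mul_nonneg (pow_nonneg (by linarith) j) (Set.indicator_nonneg (by simp) _)
  · exact mul_le_of_le_one_right (pow_nonneg (by linarith) j)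
      (Set.indicator_le_self' (by simp) _)

lemma geomPotential_le_inv (k : ℤ) : geomPotential p B k ≤ p⁻¹ := by
  calc geomPotential p B k ≤ ∑' j : ℕ, (1 - p) ^ j :=
        (summable_geomPotential B hp0 hp1 k).tsum_le_tsum
          (fun j => mul_le_of_le_one_right (pow_nonneg (by linarith) j)
            (Set.indicator_le_self' (by simp) _))
          (summable_geometric_of_lt_one (by linarith) (by linarith))
    _ = p⁻¹ := by rw [tsum_geometric_of_lt_one (by linarith) (by linarith), sub_sub_cancel]

lemma abs_geomPotential_le (k : ℤ) : |geomPotential p B k| ≤ p⁻¹ :=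
  abs_le.2 ⟨by linarith [geomPotential_nonneg B hp1 k, inv_pos.2 hp0],
    geomPotential_le_inv B hp0 hp1 k⟩

lemma geomPotential_eq_indicator_add (k : ℤ) :
    geomPotential p B k = B.indicator 1 k + (1 - p) * geomPotential p B (k + 1) := by
  rw [geomPotential, (summable_geomPotential B hp0 hp1 k).tsum_eq_zero_add, geomPotential,
    ← tsum_mul_left]
  congr 1
  · simp
  · congr 1 with j
    rw [pow_succ]
    push_cast
    ring_nf

lemma abs_geomPotential_succ_sub_le (k : ℤ) :
    |geomPotential p B (k + 1) - geomPotential p B k| ≤ 1 := by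
  have hstep := geomPotential_eq_indicator_add B hp0 hp1 k
  have h0 := geomPotential_nonneg B hp1 (k + 1)
  have h1 : p * geomPotential p B (k + 1) ≤ 1 := by
    simpa [hp0.ne'] using mul_le_mul_of_nonneg_left (geomPotential_le_inv B hp0 hp1 (k + 1)) hp0.le
  have hind : B.indicator (1 : ℤ → ℝ) k ∈ Set.Icc 0 1 := by
    by_cases hk : k ∈ B <;> simp [hk]
  rw [abs_le]
  constructor <;> nlinarith [hind.1, hind.2]

lemma abs_geomPotential_sub_le (a b : ℤ) :
    |geomPotential p B a - geomPotential p B b| ≤ |(a : ℝ) - b| := by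
  simpa using abs_sub_le_mul_of_abs_succ_sub_le (abs_geomPotential_succ_sub_le B hp0 hp1) a b

lemma ge0Prob_nonneg : 0 ≤ ge0Prob p B := by
  rw [ge0Prob_eq_mul_geomPotential]
  exact mul_nonneg hp0.le (geomPotential_nonneg B hp1 0)

lemma ge0Prob_le_one : ge0Prob p B ≤ 1 := by
  rw [ge0Prob_eq_mul_geomPotential, ← mul_inv_cancel₀ hp0.ne']
  exact mul_le_mul_of_nonneg_left (geomPotential_le_inv B hp0 hp1 0) hp0.le

end GeomPotential

lemma tsum_indicator_tail_eq_sum_range {Ω M : Type*} [AddCommMonoid M] [TopologicalSpace M]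
    (W : Ω → ℤ) (c : ℕ → M) (ω : Ω) :
    ∑' k : ℕ, {ω | (k : ℤ) + 1 ≤ W ω}.indicator (fun _ => c k) ω =
      ∑ k ∈ Finset.range (W ω).toNat, c k := by
  rw [tsum_eq_sum (s := Finset.range (W ω).toNat) fun k hk =>
    Set.indicator_of_notMem (s := {x | (k : ℤ) + 1 ≤ W x})
      (fun h : (k : ℤ) + 1 ≤ W ω => hk (Finset.mem_range.2 (by omega))) _]
  exact Finset.sum_congr rfl fun k hk =>
    Set.indicator_of_mem (s := {x | (k : ℤ) + 1 ≤ W x})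
      (show (k : ℤ) + 1 ≤ W ω by have := Finset.mem_range.1 hk; omega) _

section

variable {Ω : Type*} [MeasurableSpace Ω] {μ : Measure Ω}

lemma integrable_comp_of_abs_le [IsFiniteMeasure μ] {α : Type*} [MeasurableSpace α] [Countable α]
    [MeasurableSingletonClass α] {X : Ω → α} (hX : Measurable X) {ψ : α → ℝ} {C : ℝ}
    (hψ : ∀ a, |ψ a| ≤ C) : Integrable (fun ω => ψ (X ω)) μ :=
  .of_bound ((measurable_of_countable ψ).comp hX).aestronglyMeasurable C (ae_of_all _ fun _ => hψ _)

lemma integral_tsum_indicator_const [IsFiniteMeasure μ] {ι : Type*} [Countable ι] {s : ι → Set Ω}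
    (hs : ∀ i, MeasurableSet (s i)) (hsum : Summable fun i => μ.real (s i)) {c : ι → ℝ} {C : ℝ}
    (hc : ∀ i, |c i| ≤ C) :
    ∫ ω, ∑' i, (s i).indicator (fun _ => c i) ω ∂μ = ∑' i, μ.real (s i) * c i := by
  have hint : ∀ i, Integrable ((s i).indicator fun _ => c i) μ :=
    fun i => (integrable_const (c i)).indicator (hs i)
  have hnorm : ∀ i, ∫ ω, ‖(s i).indicator (fun _ => c i) ω‖ ∂μ = μ.real (s i) * |c i| := by
    intro i
    simp_rw [norm_indicator_eq_indicator_norm, Real.norm_eq_abs]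
    rw [integral_indicator_const _ (hs i), smul_eq_mul]
  rw [← integral_tsum_of_summable_integral_norm hint]
  · simp_rw [integral_indicator_const _ (hs _), smul_eq_mul]
  · simp_rw [hnorm]
    exact (hsum.mul_right C).of_nonneg_of_le
      (fun i => mul_nonneg measureReal_nonneg (abs_nonneg _))
      (fun i => mul_le_mul_of_nonneg_left (hc i) measureReal_nonneg)

lemma hasSum_measureReal_tail [IsFiniteMeasure μ] {W : Ω → ℤ} (hW : Measurable W)
    (hW0 : ∀ ω, 0 ≤ W ω) (hint : Integrable (fun ω => (W ω : ℝ)) μ) :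
    HasSum (fun k : ℕ => μ.real {ω | (k : ℤ) + 1 ≤ W ω}) (∫ ω, (W ω : ℝ) ∂μ) := by
  have hW0' : ∀ ω, (0 : ℝ) ≤ W ω := fun ω => Int.cast_nonneg (hW0 ω)
  have hmeas : ∀ k : ℕ, MeasurableSet {ω | (k : ℤ) + 1 ≤ W ω} :=
    fun k => measurableSet_le measurable_const hW
  have hcount : ∀ ω, ∑' k : ℕ, {ω | (k : ℤ) + 1 ≤ W ω}.indicator (1 : Ω → ENNReal) ω
      = ENNReal.ofReal (W ω) := by
    intro ω
    have hcast : (W ω : ℝ) = ((W ω).toNat : ℕ) := by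
      exact_mod_cast (Int.toNat_of_nonneg (hW0 ω)).symm
    simpa [hcast, Pi.one_def] using tsum_indicator_tail_eq_sum_range W (fun _ => (1 : ENNReal)) ω
  have hsum : ∑' k : ℕ, μ {ω | (k : ℤ) + 1 ≤ W ω} = ENNReal.ofReal (∫ ω, (W ω : ℝ) ∂μ) := by
    rw [ofReal_integral_eq_lintegral_ofReal hint (ae_of_all _ hW0')]
    simp_rw [← hcount, ← lintegral_indicator_one (hmeas _)]
    exact (lintegral_tsum fun k => (measurable_one.indicator (hmeas k)).aemeasurable).symm
  have := ENNReal.hasSum_toReal (hsum ▸ ENNReal.ofReal_ne_top)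
  rwa [← ENNReal.tsum_toReal_eq fun k => measure_ne_top _ _, hsum,
    ENNReal.toReal_ofReal (integral_nonneg hW0')] at this

lemma measureReal_mem_eq_integral_geomPotential [IsFiniteMeasure μ] {X : Ω → ℤ}
    (hX : Measurable X) (B : Set ℤ) {p : ℝ} (hp0 : 0 < p) (hp1 : p ≤ 1) :
    μ.real {ω | X ω ∈ B} =
      ∫ ω, geomPotential p B (X ω) ∂μ - (1 - p) * ∫ ω, geomPotential p B (X ω + 1) ∂μ := by
  have hg := abs_geomPotential_le B hp0 hp1
  rw [← integral_const_mul, ← integral_sub (integrable_comp_of_abs_le hX hg)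
      ((integrable_comp_of_abs_le hX fun k => hg (k + 1)).const_mul _),
    show {ω | X ω ∈ B} = X ⁻¹' B from rfl,
    ← integral_indicator_one (hX (Set.to_countable B).measurableSet)]
  congr 1 with ω
  have hstep := geomPotential_eq_indicator_add B hp0 hp1 (X ω)
  change B.indicator 1 (X ω) = _
  linarith

end

section Equilibrium

variable {Ω : Type*} [MeasurableSpace Ω] {μ : Measure Ω}

def IsDiscreteEquilibrium (μ : Measure Ω) (We W : Ω → ℤ) : Prop :=
  ∀ k : ℤ, 0 ≤ k → μ.real {ω | We ω = k} = μ.real {ω | k + 1 ≤ W ω} / ∫ ω, (W ω : ℝ) ∂μ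

variable [IsProbabilityMeasure μ] {W We : Ω → ℤ}

lemma integral_comp_eq_tsum_of_ae_nonneg {X : Ω → ℤ} (hX : Measurable X) (hX0 : ∀ᵐ ω ∂μ, 0 ≤ X ω)
    {ψ : ℤ → ℝ} {C : ℝ} (hψ : ∀ k, |ψ k| ≤ C) :
    ∫ ω, ψ (X ω) ∂μ = ∑' k : ℕ, μ.real {ω | X ω = k} * ψ k := by
  have hmeas : ∀ k : ℕ, MeasurableSet {ω | X ω = k} := fun k => hX (measurableSet_singleton _)
  rw [← integral_tsum_indicator_const hmeas (summable_measure_toReal hmeas ?_) (fun k => hψ k)]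
  · refine integral_congr_ae (hX0.mono fun ω hω => ?_)
    dsimp only
    rw [tsum_eq_single (X ω).toNat fun k hk =>
        Set.indicator_of_notMem (s := {x | X x = k}) (fun h : X ω = k => hk (by omega)) _,
      Set.indicator_of_mem (s := {x | X x = (X ω).toNat}) (show X ω = (X ω).toNat by omega)]
    congr
    omega
  · intro i j hij
    exact Set.disjoint_left.2 fun ω hi hj => hij (by simp_all)

namespace IsDiscreteEquilibrium

lemma one_le_lintegral_abs_sub (heq : IsDiscreteEquilibrium μ We W) (hW0 : ∀ ω, 0 ≤ W ω)
    (hm : ∫ ω, (W ω : ℝ) ∂μ = 0) :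
    1 ≤ ∫⁻ ω, ENNReal.ofReal |(W ω : ℝ) - We ω| ∂μ := by
  have hnull : ∀ k : ℕ, μ {ω | We ω = k} = 0 := fun k => by
    have := heq k (Int.natCast_nonneg k)
    rwa [hm, div_zero, measureReal_eq_zero_iff] at this
  have hneg : ∀ᵐ ω ∂μ, We ω < 0 := by
    refine measure_mono_null (fun ω (h : ¬ We ω < 0) => Set.mem_iUnion.2 ⟨(We ω).toNat, ?_⟩)
      (measure_iUnion_null hnull)
    simp only [Set.mem_ofPred_eq]
    omega
  calc 1 = ∫⁻ _, 1 ∂μ := by simp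
    _ ≤ _ := lintegral_mono_ae <| hneg.mono fun ω h => by
      rw [← ENNReal.ofReal_one]
      refine ENNReal.ofReal_le_ofReal (le_abs.2 (Or.inl ?_))
      have := hW0 ω
      exact_mod_cast (by omega : (1 : ℤ) ≤ W ω - We ω)

variable (heq : IsDiscreteEquilibrium μ We W) (hW : Measurable W) (hWe : Measurable We)
  (hW0 : ∀ ω, 0 ≤ W ω)
include heq hW hW0

lemma hasSum_measureReal (hm : 0 < ∫ ω, (W ω : ℝ) ∂μ) :
    HasSum (fun k : ℕ => μ.real {ω | We ω = k}) 1 := by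
  have := (hasSum_measureReal_tail hW hW0 (.of_integral_ne_zero hm.ne')).div_const
    (∫ ω, (W ω : ℝ) ∂μ)
  rw [div_self hm.ne'] at this
  exact this.congr_fun fun k => heq k (Int.natCast_nonneg k)

include hWe in
lemma ae_nonneg (hm : 0 < ∫ ω, (W ω : ℝ) ∂μ) : ∀ᵐ ω ∂μ, 0 ≤ We ω := by
  have hmeas : ∀ k : ℕ, MeasurableSet {ω | We ω = k} := fun k => hWe (measurableSet_singleton _)
  rw [ae_iff_measure_eq (measurableSet_le measurable_const hWe).nullMeasurableSet, measure_univ]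
  have hunion : {ω | 0 ≤ We ω} = ⋃ k : ℕ, {ω | We ω = k} := by
    ext ω
    simp only [Set.mem_ofPred_eq, Set.mem_iUnion]
    exact ⟨fun h => ⟨(We ω).toNat, by omega⟩, fun ⟨k, hk⟩ => hk ▸ Int.natCast_nonneg k⟩
  have hsum := heq.hasSum_measureReal hW hW0 hm
  rw [hunion, measure_iUnion ?_ hmeas, ← ENNReal.ofReal_one, ← hsum.tsum_eq,
    ENNReal.ofReal_tsum_of_nonneg (fun _ => measureReal_nonneg) hsum.summable]
  · simp_rw [measureReal_def, ENNReal.ofReal_toReal (measure_ne_top _ _)]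
  · intro i j hij
    exact Set.disjoint_left.2 fun ω hi hj => hij (by simp_all)

include hWe in
lemma integral_mul_integral_comp_eq_integral_sum_range (hm : 0 < ∫ ω, (W ω : ℝ) ∂μ)
    {ψ : ℤ → ℝ} {C : ℝ} (hψ : ∀ k, |ψ k| ≤ C) :
    (∫ ω, (W ω : ℝ) ∂μ) * ∫ ω, ψ (We ω) ∂μ =
      ∫ ω, ∑ k ∈ Finset.range (W ω).toNat, ψ k ∂μ := by
  have hmeas : ∀ k : ℕ, MeasurableSet {ω | (k : ℤ) + 1 ≤ W ω} :=
    fun k => measurableSet_le measurable_const hW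
  simp_rw [← tsum_indicator_tail_eq_sum_range W (fun k => ψ k)]
  rw [integral_tsum_indicator_const hmeas
      (hasSum_measureReal_tail hW hW0 (.of_integral_ne_zero hm.ne')).summable (fun k => hψ k),
    integral_comp_eq_tsum_of_ae_nonneg hWe (heq.ae_nonneg hW hWe hW0 hm) hψ, ← tsum_mul_left]
  congr 1 with k
  rw [heq k (Int.natCast_nonneg k)]
  field_simp

variable {p : ℝ} (hp0 : 0 < p) (hp1 : p < 1)
  (hmean : ∫ ω, (W ω : ℝ) ∂μ = (1 - p) / p)
include hWe hp0 hp1 hmean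

lemma measureReal_sub_ge0Prob_eq (B : Set ℤ) :
    μ.real {ω | We ω ∈ B} - ge0Prob p B =
      p * ∫ ω, (geomPotential p B (We ω) - geomPotential p B (W ω)) ∂μ := by
  set g := geomPotential p B
  have hm : 0 < ∫ ω, (W ω : ℝ) ∂μ := hmean ▸ div_pos (by linarith) hp0
  have hg : ∀ k, |g k| ≤ p⁻¹ := abs_geomPotential_le B hp0 hp1.le
  have hIWe : Integrable (fun ω => g (We ω)) μ := integrable_comp_of_abs_le hWe hg
  have hIWe1 : Integrable (fun ω => g (We ω + 1)) μ :=
    integrable_comp_of_abs_le hWe (fun k => hg (k + 1))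
  have hIW : Integrable (fun ω => g (W ω)) μ := integrable_comp_of_abs_le hW hg
  have htelescope : (∫ ω, (W ω : ℝ) ∂μ) * ∫ ω, (g (We ω) - g (We ω + 1)) ∂μ =
      g 0 - ∫ ω, g (W ω) ∂μ := by
    have hstep : ∀ k, |g k - g (k + 1)| ≤ 1 := fun k => by
      rw [abs_sub_comm]
      exact abs_geomPotential_succ_sub_le B hp0 hp1.le k
    rw [heq.integral_mul_integral_comp_eq_integral_sum_range hW hWe hW0 hm hstep]
    calc _ = ∫ ω, (g 0 - g (W ω)) ∂μ := by
          congr 1 with ω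
          have := Finset.sum_range_sub' (fun i : ℕ => g i) (W ω).toNat
          push_cast at this
          rwa [Int.toNat_of_nonneg (hW0 ω)] at this
      _ = _ := by
          rw [integral_sub (integrable_const _) hIW, integral_const, probReal_univ, one_smul]
  rw [integral_sub hIWe hIWe1, hmean] at htelescope
  rw [integral_sub hIWe hIW, measureReal_mem_eq_integral_geomPotential hWe B hp0 hp1.le,
    ge0Prob_eq_mul_geomPotential]
  field_simp at htelescope
  linear_combination htelescope

lemma ofReal_abs_measureReal_sub_ge0Prob_le (B : Set ℤ) :
    ENNReal.ofReal |μ.real {ω | We ω ∈ B} - ge0Prob p B| ≤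
      ENNReal.ofReal p * ∫⁻ ω, ENNReal.ofReal |(W ω : ℝ) - We ω| ∂μ := by
  rw [heq.measureReal_sub_ge0Prob_eq hW hWe hW0 hp0 hp1 hmean, abs_mul, abs_of_pos hp0,
    ENNReal.ofReal_mul hp0.le, ← Real.enorm_eq_ofReal_abs]
  gcongr
  refine (enorm_integral_le_lintegral_enorm _).trans (lintegral_mono fun ω => ?_)
  rw [Real.enorm_eq_ofReal_abs, abs_sub_comm (W ω : ℝ)]
  exact ENNReal.ofReal_le_ofReal (abs_geomPotential_sub_le B hp0 hp1.le _ _)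

end IsDiscreteEquilibrium

end Equilibrium

lemma abs_measureReal_sub_ge0Prob_le_one {Ω : Type*} [MeasurableSpace Ω] {μ : Measure Ω}
    [IsProbabilityMeasure μ] {p : ℝ} (hp0 : 0 < p) (hp1 : p ≤ 1) (s : Set Ω) (B : Set ℤ) :
    |μ.real s - ge0Prob p B| ≤ 1 :=
  abs_sub_le_of_nonneg_of_le measureReal_nonneg measureReal_le_one
    (ge0Prob_nonneg B hp0 hp1) (ge0Prob_le_one B hp0 hp1)

theorem geometric_approx_tv_equilibrium_nonneg_general
    {Ω : Type*} [m0 : MeasurableSpace Ω] (μ : Measure Ω) [IsProbabilityMeasure μ]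
    (W We : Ω → ℤ) (hW : Measurable W) (hWe : Measurable We)
    (p : ℝ) (hp0 : 0 < p) (hp1 : p ≤ 1)
    (hWnonneg : ∀ ω, 0 ≤ W ω)
    (hmean : ∫ ω, (W ω : ℝ) ∂μ = (1 - p) / p)
    (heq : ∀ k : ℤ, 0 ≤ k →
      (μ {ω | We ω = k}).toReal = (μ {ω | k + 1 ≤ W ω}).toReal / ∫ ω, (W ω : ℝ) ∂μ) :
    ENNReal.ofReal (dTVGe0 μ We p)
      ≤ ENNReal.ofReal p * ∫⁻ ω, ENNReal.ofReal |(W ω : ℝ) - We ω| ∂μ := by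
  have hequil : IsDiscreteEquilibrium μ We W := heq
  refine ENNReal.ofReal_iSup_le fun B => ?_
  rcases hp1.lt_or_eq with hp1 | rfl
  · exact hequil.ofReal_abs_measureReal_sub_ge0Prob_le hW hWe hWnonneg hp0 hp1 hmean B
  · calc ENNReal.ofReal |μ.real {ω | We ω ∈ B} - ge0Prob 1 B| ≤ 1 :=
          ENNReal.ofReal_le_one.2 (abs_measureReal_sub_ge0Prob_le_one hp0 le_rfl _ B)
      _ ≤ _ := by
        rw [ENNReal.ofReal_one, one_mul]
        exact hequil.one_le_lintegral_abs_sub hWnonneg (by rw [hmean]; norm_num)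

theorem geometric_approx_tv_equilibrium_nonneg
    {Ω : Type*} [m0 : MeasurableSpace Ω] (μ : Measure Ω) [IsProbabilityMeasure μ]
    (W We : Ω → ℤ) (hW : Measurable W) (hWe : Measurable We)
    (p : ℝ) (hp0 : 0 < p) (hp1 : p ≤ 1)
    (hWnonneg : ∀ ω, 0 ≤ W ω)
    (hWzero : 0 < μ {ω | W ω = 0})
    (hmean : ∫ ω, (W ω : ℝ) ∂μ = (1 - p) / p)
    (heq : ∀ k : ℤ, 0 ≤ k →
      (μ {ω | We ω = k}).toReal = (μ {ω | k + 1 ≤ W ω}).toReal / ∫ ω, (W ω : ℝ) ∂μ) :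
    ENNReal.ofReal (dTVGe0 μ We p)
      ≤ ENNReal.ofReal p * ∫⁻ ω, ENNReal.ofReal |(W ω : ℝ) - We ω| ∂μ :=
  geometric_approx_tv_equilibrium_nonneg_general (m0 := m0) μ W We hW hWe p hp0 hp1 hWnonneg hmean
    heq
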